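/- arXiv:2504.05821 — 3 statements merged into one kernel-verified Lean document; each statement's English description precedes it below -/
import Mathlib

section
/- Let B be a bialgebra for which i_B : B → B ⊘ B, b ↦ b ⊘ 1, is surjective, and let S be a linear endomorphism of B with 1 ⊘ b = S(b) ⊘ 1 for all b. Then for all a, b ∈ B: (1) S(ab) − S(b)S(a) ∈ ker(i_B); (2) a₁S(a₂) − ε(a)1 ∈ ker(i_B); (3) S(a₂) ⊗ S(a₁) − S(a)₁ ⊗ S(a)₂ ∈ ker(i_B ⊗ i_B). -/
noncomputable section
open TensorProduct LinearMap

/-- Convolution product of linear maps from a bialgebra to an algebra. -/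
def conv {k B A : Type*} [CommRing k] [Ring B] [Bialgebra k B]
    [Ring A] [Algebra k A] (f g : B →ₗ[k] A) : B →ₗ[k] A :=
  LinearMap.mul' k A ∘ₗ TensorProduct.map f g ∘ₗ Coalgebra.comul

/-- Unit of the convolution algebra: u ∘ ε. -/
def convUnit (k B A : Type*) [CommRing k] [Ring B] [Bialgebra k B]
    [Ring A] [Algebra k A] : B →ₗ[k] A :=
  Algebra.linearMap k A ∘ₗ Coalgebra.counit

/-- n-th convolution power of the identity. -/
def convPow (k B : Type*) [CommRing k] [Ring B] [Bialgebra k B] : ℕ → (B →ₗ[k] B)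
  | 0 => convUnit k B B
  | n + 1 => conv (convPow k B n) LinearMap.id

/-- The submodule (B ⊗ B)·Δ(ker ε) of B ⊗ B. -/
def oslashRel (k B : Type*) [CommRing k] [Ring B] [Bialgebra k B] :
    Submodule k (B ⊗[k] B) :=
  Submodule.span k {z | ∃ (m : B ⊗[k] B) (b : B),
    Coalgebra.counit (R := k) b = 0 ∧ z = m * Coalgebra.comul b}

/-- B ⊘ B. -/
abbrev Oslash (k B : Type*) [CommRing k] [Ring B] [Bialgebra k B] :=
  (B ⊗[k] B) ⧸ oslashRel k B

/-- The class of x ⊗ y in B ⊘ B. -/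
abbrev omk (k : Type*) {B : Type*} [CommRing k] [Ring B] [Bialgebra k B]
    (z : B ⊗[k] B) : Oslash k B := Submodule.Quotient.mk z

/-- i_B : B → B ⊘ B, b ↦ b ⊘ 1. -/
def iB (k B : Type*) [CommRing k] [Ring B] [Bialgebra k B] : B →ₗ[k] Oslash k B :=
  (oslashRel k B).mkQ ∘ₗ (TensorProduct.mk k B B).flip 1

/-- The diagonal right coaction of B on B ⊗ B: Σ x₁ ⊗ y₁ ⊗ x₂y₂. -/
def coact (k B : Type*) [CommRing k] [Ring B] [Bialgebra k B] :
    (B ⊗[k] B) →ₗ[k] (B ⊗[k] B) ⊗[k] B :=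
  (TensorProduct.map LinearMap.id (LinearMap.mul' k B)) ∘ₗ
    (TensorProduct.tensorTensorTensorComm k B B B B).toLinearMap ∘ₗ
    (TensorProduct.map Coalgebra.comul Coalgebra.comul)

/-- z ↦ z ⊗ 1. -/
def unitR (k B : Type*) [CommRing k] [Ring B] [Bialgebra k B] :
    (B ⊗[k] B) →ₗ[k] (B ⊗[k] B) ⊗[k] B :=
  (TensorProduct.map LinearMap.id (Algebra.linearMap k B)) ∘ₗ
    (TensorProduct.rid k (B ⊗[k] B)).symm.toLinearMap

/-- B ⧄ B : the coinvariants of B ⊗ B. -/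
def coinv (k B : Type*) [CommRing k] [Ring B] [Bialgebra k B] :
    Submodule k (B ⊗[k] B) :=
  LinearMap.eqLocus (coact k B) (unitR k B)

/-- Σ x ⊗ y ↦ Σ x ε(y), on all of B ⊗ B. -/
def pB0 (k B : Type*) [CommRing k] [Ring B] [Bialgebra k B] :
    (B ⊗[k] B) →ₗ[k] B :=
  (TensorProduct.rid k B).toLinearMap ∘ₗ TensorProduct.map LinearMap.id Coalgebra.counit

/-- Σ x ⊗ y ↦ Σ ε(x) y, on all of B ⊗ B. -/
def qB0 (k B : Type*) [CommRing k] [Ring B] [Bialgebra k B] :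
    (B ⊗[k] B) →ₗ[k] B :=
  (TensorProduct.lid k B).toLinearMap ∘ₗ TensorProduct.map Coalgebra.counit LinearMap.id

/-- p_B : B ⧄ B → B. -/
def pB (k B : Type*) [CommRing k] [Ring B] [Bialgebra k B] :
    coinv k B →ₗ[k] B :=
  pB0 k B ∘ₗ (coinv k B).subtype

/-! Multiplying `1 ⊘ c = S(c) ⊘ 1` on the left by `x ⊗ y` (the relations form a left ideal)
gives `x ⊘ yc = xS(c) ⊘ y`, hence `x ⊘ y = i_B(xS(y))`. This yields (1) at once, and (2) because
`a₁S(a₂) ⊘ 1 = a₁ ⊘ a₂` is the class of `(1 ⊗ 1)Δ(a) ≡ ε(a)(1 ⊗ 1)`. For (3), coassociativity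
shows that `x ⊗ y ↦ (x₁ ⊘ y₂) ⊗ (x₂ ⊘ y₁)`, the comultiplication of `B ⊗ Bᶜᵒᵖ` followed by the
quotient maps, kills `(B ⊗ B)Δ(ker ε)`; the induced map sends `1 ⊘ a = S(a) ⊘ 1` to the two
sides of (3). -/

/-- `x ⊗ y ↦ (x₁ ⊗ y₂) ⊗ (x₂ ⊗ y₁)`, the comultiplication of `C ⊗ Cᶜᵒᵖ`. -/
def twistedComul (R C : Type*) [CommSemiring R] [AddCommMonoid C] [Module R C]
    [Coalgebra R C] : C ⊗[R] C →ₗ[R] (C ⊗[R] C) ⊗[R] (C ⊗[R] C) :=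
  (tensorTensorTensorComm R C C C C).toLinearMap ∘ₗ
    map id (TensorProduct.comm R C C).toLinearMap ∘ₗ map Coalgebra.comul Coalgebra.comul

section Coalgebra

variable {R C : Type*} [CommSemiring R] [AddCommMonoid C] [Module R C] [Coalgebra R C]

/-- In Sweedler notation: `(c₁ ⊗ c₄) ⊗ (c₂ ⊗ c₃) = (c₁ ⊗ c₃) ⊗ Δ c₂`. -/
lemma twistedComul_comp_comul :
    twistedComul R C ∘ₗ Coalgebra.comul =
      (rightComm R C (C ⊗[R] C) C).toLinearMap ∘ₗ
        (Coalgebra.comul.lTensor C ∘ₗ Coalgebra.comul).rTensor C ∘ₗ Coalgebra.comul := by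
  have hcoassoc : map Coalgebra.comul Coalgebra.comul ∘ₗ (Coalgebra.comul (R := R) (A := C)) =
      (TensorProduct.assoc R (C ⊗[R] C) C C).toLinearMap ∘ₗ
        ((TensorProduct.assoc R C C C).symm.toLinearMap ∘ₗ
          Coalgebra.comul.lTensor C ∘ₗ Coalgebra.comul).rTensor C ∘ₗ Coalgebra.comul := by
    simp only [coassoc_simps]
  have hshuffle : (tensorTensorTensorComm R C C C C).toLinearMap ∘ₗ
      map id (TensorProduct.comm R C C).toLinearMap ∘ₗ
      (TensorProduct.assoc R (C ⊗[R] C) C C).toLinearMap ∘ₗ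
      (TensorProduct.assoc R C C C).symm.toLinearMap.rTensor C =
        (rightComm R C (C ⊗[R] C) C).toLinearMap := by
    ext; rfl
  rw [twistedComul, comp_assoc, comp_assoc, hcoassoc, rTensor_comp, ← hshuffle]
  simp only [comp_assoc]

lemma map_twistedComul_comul {M N : Type*} [AddCommMonoid M] [Module R M] [AddCommMonoid N]
    [Module R N] (f : C ⊗[R] C →ₗ[R] M) (g : C ⊗[R] C →ₗ[R] N) (n : N)
    (hg : ∀ c : C, g (Coalgebra.comul c) = Coalgebra.counit (R := R) c • n) (c : C) :
    map f g (twistedComul R C (Coalgebra.comul c)) = f (Coalgebra.comul c) ⊗ₜ n := by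
  have hcounit (y : C) (w : C ⊗[R] C) :
      map f g (rightComm R C (C ⊗[R] C) C (Coalgebra.comul.lTensor C w ⊗ₜ y)) =
        f (TensorProduct.rid R C (Coalgebra.counit.lTensor C w) ⊗ₜ y) ⊗ₜ n := by
    induction w using TensorProduct.induction_on with
    | zero => simp
    | add w w' hw hw' => simp only [map_add, add_tmul, hw, hw']
    | tmul a b => simp [hg, ← smul_tmul']
  have hcollapse (z : C ⊗[R] C) :
      map f g (rightComm R C (C ⊗[R] C) C
        ((Coalgebra.comul.lTensor C ∘ₗ Coalgebra.comul).rTensor C z)) = f z ⊗ₜ n := by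
    induction z using TensorProduct.induction_on with
    | zero => simp
    | add z z' hz hz' => simp only [map_add, add_tmul, hz, hz']
    | tmul x y => simp [hcounit]
  rw [← LinearMap.comp_apply (twistedComul R C), twistedComul_comp_comul]
  exact hcollapse _

end Coalgebra

lemma twistedComul_mul {k B : Type*} [CommSemiring k] [Semiring B] [Bialgebra k B]
    (x y : B ⊗[k] B) :
    twistedComul k B (x * y) = twistedComul k B x * twistedComul k B y := by
  have hAlgHom : twistedComul k B =
      ((Algebra.TensorProduct.tensorTensorTensorComm k k k k B B B B).toAlgHom.comp <|
        (Algebra.TensorProduct.map (AlgHom.id k (B ⊗[k] B))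
          (Algebra.TensorProduct.comm k B B).toAlgHom).comp <|
        Algebra.TensorProduct.map (Bialgebra.comulAlgHom k B)
          (Bialgebra.comulAlgHom k B)).toLinearMap := by
    ext; rfl
  simp only [hAlgHom, AlgHom.toLinearMap_apply, map_mul]

section Oslash

variable {k B : Type*} [CommRing k] [Ring B] [Bialgebra k B]

lemma mul_comul_mem_oslashRel (m : B ⊗[k] B) {b : B} (hb : Coalgebra.counit (R := k) b = 0) :
    m * Coalgebra.comul b ∈ oslashRel k B :=
  Submodule.subset_span ⟨m, b, hb, rfl⟩

lemma mul_mem_oslashRel (w : B ⊗[k] B) {z : B ⊗[k] B} (hz : z ∈ oslashRel k B) :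
    w * z ∈ oslashRel k B := by
  induction hz using Submodule.span_induction with
  | mem x hx =>
    obtain ⟨m, b, hb, rfl⟩ := hx
    rw [← mul_assoc]
    exact mul_comul_mem_oslashRel _ hb
  | zero => simp
  | add x y _ _ hx hy => simpa [mul_add] using add_mem hx hy
  | smul c x _ hx => simpa [mul_smul_comm] using Submodule.smul_mem _ c hx

lemma omk_mul_comul (m : B ⊗[k] B) (c : B) :
    omk k (m * Coalgebra.comul c) = Coalgebra.counit (R := k) c • omk k m := by
  rw [← Submodule.Quotient.mk_smul, Submodule.Quotient.eq]
  convert mul_comul_mem_oslashRel (k := k) m (b := c - Coalgebra.counit (R := k) c • 1)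
    (by simp) using 1
  simp [mul_sub]

lemma omk_mul_eq_omk_mul (w : B ⊗[k] B) {z z' : B ⊗[k] B} (h : omk k z = omk k z') :
    omk k (w * z) = omk k (w * z') := by
  rw [Submodule.Quotient.eq] at h ⊢
  simpa [mul_sub] using mul_mem_oslashRel w h

lemma oslashRel_le_ker {M : Type*} [AddCommGroup M] [Module k M] (f : B ⊗[k] B →ₗ[k] M)
    (hf : ∀ m c, f (m * Coalgebra.comul c) = Coalgebra.counit (R := k) c • f m) :
    oslashRel k B ≤ ker f :=
  Submodule.span_le.mpr fun _ ⟨m, c, hc, hz⟩ => by simp [hz, hf, hc]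

lemma map_mkQ_twistedComul_mul_comul (m : B ⊗[k] B) (c : B) :
    map (oslashRel k B).mkQ (oslashRel k B).mkQ (twistedComul k B (m * Coalgebra.comul c)) =
      Coalgebra.counit (R := k) c •
        map (oslashRel k B).mkQ (oslashRel k B).mkQ (twistedComul k B m) := by
  rw [twistedComul_mul]
  induction twistedComul k B m using TensorProduct.induction_on with
  | zero => simp
  | add P P' hP hP' => simp only [add_mul, map_add, hP, hP', smul_add]
  | tmul α β =>
    have hmul : ∀ Q : (B ⊗[k] B) ⊗[k] (B ⊗[k] B),
        (α ⊗ₜ[k] β) * Q = map (mulLeft k α) (mulLeft k β) Q := by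
      intro Q
      induction Q using TensorProduct.induction_on with
      | zero => simp
      | add Q Q' hQ hQ' => simp only [mul_add, map_add, hQ, hQ']
      | tmul γ δ => simp
    rw [hmul, ← LinearMap.comp_apply, ← map_comp,
      map_twistedComul_comul _ _ _ (omk_mul_comul β) c]
    simp [omk_mul_comul, smul_tmul']

def oslashComul (k B : Type*) [CommRing k] [Ring B] [Bialgebra k B] :
    Oslash k B →ₗ[k] Oslash k B ⊗[k] Oslash k B :=
  (oslashRel k B).liftQ (map (oslashRel k B).mkQ (oslashRel k B).mkQ ∘ₗ twistedComul k B)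
    (oslashRel_le_ker _ map_mkQ_twistedComul_mul_comul)

lemma oslashComul_omk (z : B ⊗[k] B) :
    oslashComul k B (omk k z) =
      map (oslashRel k B).mkQ (oslashRel k B).mkQ (twistedComul k B z) :=
  rfl

lemma oslashComul_iB (b : B) :
    oslashComul k B (iB k B b) = map (iB k B) (iB k B) (Coalgebra.comul b) := by
  have h : twistedComul k B (b ⊗ₜ[k] 1) =
      tensorTensorTensorComm k B B B B (Coalgebra.comul b ⊗ₜ[k] ((1 : B) ⊗ₜ[k] (1 : B))) := by
    simp [twistedComul, Algebra.TensorProduct.one_def]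
  rw [iB, comp_apply, flip_apply, mk_apply, Submodule.mkQ_apply, oslashComul_omk, h]
  induction Coalgebra.comul (R := k) b using TensorProduct.induction_on with
  | zero => simp
  | add z z' hz hz' => simp only [add_tmul, map_add, hz, hz']
  | tmul x y => rfl

end Oslash

section Antipode

variable {k B : Type*} [CommRing k] [Ring B] [Bialgebra k B] {S : B →ₗ[k] B}

lemma omk_tmul_mul (hS : ∀ b : B, omk k ((1 : B) ⊗ₜ[k] b) = omk k (S b ⊗ₜ[k] (1 : B)))
    (x y c : B) : omk k (x ⊗ₜ[k] (y * c)) = omk k ((x * S c) ⊗ₜ[k] y) := by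
  simpa using omk_mul_eq_omk_mul (x ⊗ₜ[k] y) (hS c)

lemma omk_tmul_eq_iB (hS : ∀ b : B, omk k ((1 : B) ⊗ₜ[k] b) = omk k (S b ⊗ₜ[k] (1 : B)))
    (x y : B) : omk k (x ⊗ₜ[k] y) = iB k B (x * S y) := by
  have h := omk_tmul_mul hS x 1 y
  rwa [one_mul] at h

lemma iB_antipode_mul (hS : ∀ b : B, omk k ((1 : B) ⊗ₜ[k] b) = omk k (S b ⊗ₜ[k] (1 : B)))
    (a b : B) : iB k B (S (a * b)) = iB k B (S b * S a) :=
  calc iB k B (S (a * b)) = omk k ((1 : B) ⊗ₜ[k] (a * b)) := (hS _).symm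
    _ = omk k (S b ⊗ₜ[k] a) := by simpa using omk_tmul_mul hS 1 a b
    _ = iB k B (S b * S a) := omk_tmul_eq_iB hS _ _

lemma iB_mul'_map_antipode_comul
    (hS : ∀ b : B, omk k ((1 : B) ⊗ₜ[k] b) = omk k (S b ⊗ₜ[k] (1 : B))) (a : B) :
    iB k B (mul' k B (map id S (Coalgebra.comul a))) =
      iB k B (Coalgebra.counit (R := k) a • 1) := by
  have h : iB k B ∘ₗ mul' k B ∘ₗ map id S = (oslashRel k B).mkQ :=
    TensorProduct.ext' fun x y => (omk_tmul_eq_iB hS x y).symm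
  calc iB k B (mul' k B (map id S (Coalgebra.comul a))) = omk k (1 * Coalgebra.comul a) := by
        rw [one_mul]; exact congr($h _)
    _ = iB k B (Coalgebra.counit (R := k) a • 1) := by
        rw [omk_mul_comul, map_smul]; rfl

lemma oslashComul_omk_one_tmul
    (hS : ∀ b : B, omk k ((1 : B) ⊗ₜ[k] b) = omk k (S b ⊗ₜ[k] (1 : B))) (a : B) :
    oslashComul k B (omk k ((1 : B) ⊗ₜ[k] a)) =
      map (iB k B) (iB k B) (map S S (TensorProduct.comm k B B (Coalgebra.comul a))) := by
  have h : twistedComul k B ((1 : B) ⊗ₜ[k] a) =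
      tensorTensorTensorComm k B B B B
        (((1 : B) ⊗ₜ[k] (1 : B)) ⊗ₜ[k] TensorProduct.comm k B B (Coalgebra.comul a)) := by
    simp [twistedComul, Algebra.TensorProduct.one_def]
  rw [oslashComul_omk, h]
  induction TensorProduct.comm k B B (Coalgebra.comul (R := k) a) using
    TensorProduct.induction_on with
  | zero => simp
  | add z z' hz hz' => simp only [tmul_add, map_add, hz, hz']
  | tmul x y =>
    simp only [tensorTensorTensorComm_tmul, map_tmul, Submodule.mkQ_apply, hS]
    rfl

end Antipode

theorem stmt6_general (k B : Type*) [Field k] [Ring B] [Bialgebra k B]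
    (S : B →ₗ[k] B)
    (hS : ∀ b : B, omk k ((1 : B) ⊗ₜ[k] b) = omk k (S b ⊗ₜ[k] (1 : B))) :
    ∀ a b : B,
      iB k B (S (a * b) - S b * S a) = 0 ∧
      iB k B (LinearMap.mul' k B
        ((TensorProduct.map LinearMap.id S) (Coalgebra.comul (R := k) a))
          - Coalgebra.counit (R := k) a • (1 : B)) = 0 ∧
      (TensorProduct.map (iB k B) (iB k B))
        ((TensorProduct.map S S) ((TensorProduct.comm k B B) (Coalgebra.comul (R := k) a))
          - Coalgebra.comul (R := k) (S a)) = 0 := by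
  intro a b
  refine ⟨?_, ?_, ?_⟩
  · rw [map_sub, sub_eq_zero]
    exact iB_antipode_mul hS a b
  · rw [map_sub, sub_eq_zero]
    exact iB_mul'_map_antipode_comul hS a
  · rw [map_sub, sub_eq_zero, ← oslashComul_omk_one_tmul hS, ← oslashComul_iB]
    exact congrArg _ (hS a)

theorem stmt6 (k B : Type*) [Field k] [Ring B] [Bialgebra k B]
    (hsurj : Function.Surjective (iB k B))
    (S : B →ₗ[k] B)
    (hS : ∀ b : B, omk k ((1 : B) ⊗ₜ[k] b) = omk k (S b ⊗ₜ[k] (1 : B))) :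
    ∀ a b : B,
      iB k B (S (a * b) - S b * S a) = 0 ∧
      iB k B (LinearMap.mul' k B
        ((TensorProduct.map LinearMap.id S) (Coalgebra.comul (R := k) a))
          - Coalgebra.counit (R := k) a • (1 : B)) = 0 ∧
      (TensorProduct.map (iB k B) (iB k B))
        ((TensorProduct.map S S) ((TensorProduct.comm k B B) (Coalgebra.comul (R := k) a))
          - Coalgebra.comul (R := k) (S a)) = 0 :=
  stmt6_general k B S hS
end
end

section
/- Let f : B → B' be a bialgebra map that is right convolution invertible (there exists g : B → B' with f * g = u∘ε). If f is surjective and B' admits a left n-antipode, then B' is a Hopf algebra. Dually, if f is injective and B admits a left n-antipode, then B is a Hopf algebra. -/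
noncomputable section
open TensorProduct LinearMap

/-!
Convolution makes `WithConv (C →ₗ[k] A)` a monoid, and everything happens there. In a monoid, if
`a * b = 1` and `s * a ^ (n + 1) = a ^ n`, right multiplication by `b ^ n` gives `s * a = 1`.
Precomposition with a surjective, resp. postcomposition with an injective, bialgebra map `f` is an
injective monoid hom `φ` with `φ id = f`. It carries the left `n`-antipode identity of `S` to one
for `φ S` and `f`, so `φ S` is a left inverse of `f`, hence equals its right inverse `g`. Then
`φ (id * S) = f * g = 1`, so `id * S = 1`, and `S * id = 1` follows from the first step again.
-/

open WithConv

section Monoid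

variable {M N : Type*} [Monoid M] [Monoid N]

theorem mul_eq_one_of_mul_eq_one_of_mul_pow_succ_eq_pow {a b s : M} (n : ℕ) (hab : a * b = 1)
    (hs : s * a ^ (n + 1) = a ^ n) : s * a = 1 :=
  calc s * a = s * a * (a ^ n * b ^ n) := by rw [pow_mul_pow_eq_one n hab, mul_one]
    _ = s * a ^ (n + 1) * b ^ n := by simp only [pow_succ', mul_assoc]
    _ = 1 := by rw [hs, pow_mul_pow_eq_one n hab]

theorem mul_eq_one_and_mul_eq_one_of_injective_of_mul_pow_succ_eq_pow (φ : N →* M)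
    (hφ : Function.Injective φ) {x s : N} {y : M} (hy : φ x * y = 1) (n : ℕ)
    (hs : s * x ^ (n + 1) = x ^ n) : s * x = 1 ∧ x * s = 1 := by
  have hφs : φ s * φ x = 1 := mul_eq_one_of_mul_eq_one_of_mul_pow_succ_eq_pow n hy <| by
    rw [← map_pow, ← map_pow, ← map_mul, hs]
  have hxs : x * s = 1 := hφ (by rw [map_mul, map_one, left_inv_eq_right_inv hφs hy, hy])
  exact ⟨mul_eq_one_of_mul_eq_one_of_mul_pow_succ_eq_pow n hxs hs, hxs⟩

end Monoid

section ConvolutionHom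

variable {k C C' A A' : Type*} [CommSemiring k]
  [AddCommMonoid C] [Module k C] [Coalgebra k C] [AddCommMonoid C'] [Module k C'] [Coalgebra k C']
  [Semiring A] [Algebra k A] [Semiring A'] [Algebra k A']

def precompConvHom (φ : C →ₗc[k] C') :
    WithConv (C' →ₗ[k] A) →* WithConv (C →ₗ[k] A) where
  toFun h := toConv (h.ofConv ∘ₗ φ.toLinearMap)
  map_one' := by
    ext x
    simp
  map_mul' h h' := WithConv.ext (LinearMap.convMul_comp_coalgHom_distrib h h' φ)

theorem precompConvHom_injective {φ : C →ₗc[k] C'} (hφ : Function.Surjective φ) :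
    Function.Injective (precompConvHom (A := A) φ) := fun _ _ hh' =>
  WithConv.ext ((LinearMap.cancel_right hφ).mp (congrArg ofConv hh'))

def postcompConvHom (ψ : A →ₐ[k] A') :
    WithConv (C →ₗ[k] A) →* WithConv (C →ₗ[k] A') where
  toFun h := toConv (ψ.toLinearMap ∘ₗ h.ofConv)
  map_one' := by
    ext x
    simp
  map_mul' h h' := WithConv.ext (LinearMap.algHom_comp_convMul_distrib ψ h h')

theorem postcompConvHom_injective {ψ : A →ₐ[k] A'} (hψ : Function.Injective ψ) :
    Function.Injective (postcompConvHom (C := C) ψ) := fun _ _ hh' =>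
  WithConv.ext ((LinearMap.cancel_left hψ).mp (congrArg ofConv hh'))

end ConvolutionHom

section Conv

variable {k B A : Type*} [CommRing k] [Ring B] [Bialgebra k B] [Ring A] [Algebra k A]

theorem toConv_conv (f g : B →ₗ[k] A) : toConv (conv f g) = toConv f * toConv g := rfl

theorem toConv_convUnit : toConv (convUnit k B A) = 1 := rfl

theorem toConv_convPow (n : ℕ) : toConv (convPow k B n) = toConv LinearMap.id ^ n := by
  induction n with
  | zero => rfl
  | succ n ih => rw [pow_succ, ← ih]; rfl

theorem conv_eq_convUnit_and_conv_eq_convUnit_of_injective {H : Type*} [Ring H] [Bialgebra k H]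
    (φ : WithConv (H →ₗ[k] H) →* WithConv (B →ₗ[k] A)) (hφ : Function.Injective φ)
    {g : B →ₗ[k] A} (hg : conv (φ (toConv LinearMap.id)).ofConv g = convUnit k B A)
    {S : H →ₗ[k] H} {n : ℕ} (hS : conv S (convPow k H (n + 1)) = convPow k H n) :
    conv S LinearMap.id = convUnit k H H ∧ conv LinearMap.id S = convUnit k H H := by
  have hS' : toConv S * toConv LinearMap.id ^ (n + 1) = toConv LinearMap.id ^ n := by
    rw [← toConv_convPow, ← toConv_convPow, ← toConv_conv, hS]
  have hfg : φ (toConv LinearMap.id) * toConv g = 1 := by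
    rw [← toConv_ofConv (φ _), ← toConv_conv, hg, toConv_convUnit]
  obtain ⟨hSid, hidS⟩ :=
    mul_eq_one_and_mul_eq_one_of_injective_of_mul_pow_succ_eq_pow φ hφ hfg n hS'
  exact ⟨congrArg ofConv hSid, congrArg ofConv hidS⟩

end Conv

theorem stmt10 (k B B' : Type*) [Field k] [Ring B] [Bialgebra k B]
    [Ring B'] [Bialgebra k B']
    (f : B →ₐc[k] B') (g : B →ₗ[k] B')
    (hg : conv f.toLinearMap g = convUnit k B B') :
    (Function.Surjective f →
      (∃ (n : ℕ) (S : B' →ₗ[k] B'), conv S (convPow k B' (n + 1)) = convPow k B' n) →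
      ∃ S : B' →ₗ[k] B', conv S LinearMap.id = convUnit k B' B' ∧
        conv LinearMap.id S = convUnit k B' B') ∧
    (Function.Injective f →
      (∃ (n : ℕ) (S : B →ₗ[k] B), conv S (convPow k B (n + 1)) = convPow k B n) →
      ∃ S : B →ₗ[k] B, conv S LinearMap.id = convUnit k B B ∧
        conv LinearMap.id S = convUnit k B B) := by
  refine ⟨fun hsurj ⟨n, S, hS⟩ => ?_, fun hinj ⟨n, S, hS⟩ => ?_⟩
  · exact ⟨S, conv_eq_convUnit_and_conv_eq_convUnit_of_injective
      (precompConvHom (f : B →ₗc[k] B')) (precompConvHom_injective hsurj) hg hS⟩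
  · exact ⟨S, conv_eq_convUnit_and_conv_eq_convUnit_of_injective
      (postcompConvHom (f : B →ₐ[k] B')) (postcompConvHom_injective hinj) hg hS⟩
end
end

section
/- Let B = kM be a monoid bialgebra. Then: (a) the map p_B : B ⧄ B → B is surjective if and only if M is a group; (b) p_B is injective if and only if every element of M has at most one right inverse; (c) the map i_B : B → B ⊘ B is injective if and only if M is right cancellative. -/
noncomputable section
open TensorProduct LinearMap

/-!
Each `a ⊗ b` (`a b : M`) is an eigenvector of the coaction, `a ⊗ b ↦ (a ⊗ b) ⊗ ab`, so `B ⧄ B`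
has the basis `a ⊗ b`, `ab = 1`, which `p_B` sends to `a`. Hence `p_B` is onto iff every element
has a right inverse, i.e. `M` is a group, and one-to-one iff `a` determines its right inverse.
In `B ⊘ B`, multiplying by `Δ g - 1 ∈ Δ(ker ε)` identifies `ag ⊗ bg` with `a ⊗ b`, so
`a ⊘ 1 = ac ⊘ c` and injectivity of `i_B` forces right cancellation. Conversely, for right
cancellative `M` the map `a ⊗ b ↦ ab⁻¹` (the unique `z` with `zb = a`, or `0` if there is none)
descends to `B ⊘ B` and is a left inverse of `i_B`.
-/

section MonoidBialgebra

open Module Coalgebra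

theorem forall_isUnit_iff_forall_exists_mul_eq_one {M : Type*} [Monoid M] :
    (∀ x : M, IsUnit x) ↔ ∀ x : M, ∃ y, x * y = 1 := by
  refine ⟨fun h x => (h x).exists_right_inv, fun h x => ?_⟩
  obtain ⟨y, hxy⟩ := h x
  obtain ⟨z, hyz⟩ := h y
  obtain rfl : x = z := left_inv_eq_right_inv hxy hyz
  exact isUnit_iff_exists.mpr ⟨y, hxy, hyz⟩

variable {k B M : Type*} [CommRing k] [Ring B] [Bialgebra k B] [Monoid M]

theorem unitR_apply (z : B ⊗[k] B) : unitR k B z = z ⊗ₜ[k] 1 := by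
  simp [unitR]

theorem coact_tmul_of_isGroupLikeElem {x y : B} (hx : IsGroupLikeElem k x)
    (hy : IsGroupLikeElem k y) : coact k B (x ⊗ₜ[k] y) = (x ⊗ₜ[k] y) ⊗ₜ[k] (x * y) := by
  simp [coact, hx.comul_eq_tmul_self, hy.comul_eq_tmul_self]

theorem pB0_tmul (x y : B) : pB0 k B (x ⊗ₜ[k] y) = counit (R := k) y • x := by
  simp [pB0]

theorem omk_mul_comul_of_isGroupLikeElem (z : B ⊗[k] B) {x : B} (hx : IsGroupLikeElem k x) :
    omk k (z * comul x) = omk k z := by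
  refine (Submodule.Quotient.eq _).mpr (Submodule.subset_span ⟨z, x - 1, ?_, ?_⟩)
  · simp [hx.counit_eq_one]
  · rw [map_sub, Bialgebra.comul_one, mul_sub, mul_one]

structure IsMonoidBialgebraBasis (bas : Basis M k B) : Prop where
  isGroupLikeElem : ∀ g, IsGroupLikeElem k (bas g)
  map_mul : ∀ a b, bas (a * b) = bas a * bas b
  map_one : bas 1 = 1

variable (bas : Basis M k B)

/-- The basis element `ab⁻¹` (any `z` with `zb = a`), or `0` when there is none. -/
def divRight (a b : M) : B :=
  open Classical in if h : ∃ z, z * b = a then bas h.choose else 0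

variable {bas}

theorem divRight_one (a : M) : divRight bas a 1 = bas a := by
  have h : ∃ z, z * 1 = a := ⟨a, mul_one a⟩
  rw [divRight, dif_pos h, ← mul_one h.choose, h.choose_spec]

theorem divRight_mul_right (hcancel : ∀ a b c : M, a * c = b * c → a = b) (a b g : M) :
    divRight bas (a * g) (b * g) = divRight bas a b := by
  have hiff : (∃ z, z * (b * g) = a * g) ↔ ∃ z, z * b = a :=
    exists_congr fun z => ⟨fun h => hcancel _ _ g (by rw [mul_assoc, h]),
      fun h => by rw [← mul_assoc, h]⟩
  by_cases h : ∃ z, z * b = a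
  · have h' := hiff.mpr h
    rw [divRight, divRight, dif_pos h', dif_pos h]
    exact congrArg bas (hcancel _ _ b (hcancel _ _ g (by
      rw [mul_assoc, h'.choose_spec, h.choose_spec])))
  · rw [divRight, divRight, dif_neg (mt hiff.mp h), dif_neg h]

variable (hbas : IsMonoidBialgebraBasis bas)
include hbas

theorem coinv_eq_span :
    coinv k B = Submodule.span k
      (Set.range fun s : {p : M × M // p.1 * p.2 = 1} => bas.tensorProduct bas s) := by
  refine le_antisymm (fun z hz => ?_) (Submodule.span_le.mpr ?_)
  · -- `Φ` takes the coefficient of `1` in the last factor: `Φ ∘ unitR = id`, while `Φ ∘ coact`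
    -- keeps `a ⊗ b` if `ab = 1` and kills it otherwise.
    let Φ : (B ⊗[k] B) ⊗[k] B →ₗ[k] B ⊗[k] B :=
      (TensorProduct.rid k _).toLinearMap ∘ₗ TensorProduct.map LinearMap.id (bas.coord 1)
    have hΦ : ∀ (w : B ⊗[k] B) (g : M), Φ (w ⊗ₜ[k] bas g) = bas.repr (bas g) 1 • w := by
      simp [Φ]
    have hrange : LinearMap.range (Φ ∘ₗ coact k B) ≤ Submodule.span k
        (Set.range fun s : {p : M × M // p.1 * p.2 = 1} => bas.tensorProduct bas s) := by
      rw [LinearMap.range_eq_map, ← (bas.tensorProduct bas).span_eq, Submodule.map_span,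
        Submodule.span_le]
      rintro _ ⟨_, ⟨p, rfl⟩, rfl⟩
      rw [SetLike.mem_coe, LinearMap.comp_apply, Basis.tensorProduct_apply',
        coact_tmul_of_isGroupLikeElem (hbas.isGroupLikeElem _) (hbas.isGroupLikeElem _),
        ← hbas.map_mul, hΦ, Basis.repr_self]
      by_cases hp : p.1 * p.2 = 1
      · rw [hp, Finsupp.single_eq_same, one_smul, ← Basis.tensorProduct_apply']
        exact Submodule.subset_span ⟨⟨p, hp⟩, rfl⟩
      · rw [Finsupp.single_eq_of_ne' hp, zero_smul]
        exact Submodule.zero_mem _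
    have hz : coact k B z = unitR k B z := hz
    have hunit : Φ (unitR k B z) = z := by
      rw [unitR_apply, ← hbas.map_one, hΦ, Basis.repr_self, Finsupp.single_eq_same, one_smul]
    exact hunit ▸ hz ▸ hrange ⟨z, rfl⟩
  · rintro _ ⟨⟨p, hp⟩, rfl⟩
    show coact k B (bas.tensorProduct bas p) = unitR k B (bas.tensorProduct bas p)
    rw [Basis.tensorProduct_apply', unitR_apply,
      coact_tmul_of_isGroupLikeElem (hbas.isGroupLikeElem _) (hbas.isGroupLikeElem _),
      ← hbas.map_mul, hp, hbas.map_one]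

def coinvBasis : Basis {p : M × M // p.1 * p.2 = 1} k (coinv k B) :=
  (Basis.span ((bas.tensorProduct bas).linearIndependent.comp _ Subtype.val_injective)).map
    (LinearEquiv.ofEq _ _ (coinv_eq_span hbas).symm)

theorem coinvBasis_apply (s : {p : M × M // p.1 * p.2 = 1}) :
    (coinvBasis hbas s : B ⊗[k] B) = bas s.1.1 ⊗ₜ[k] bas s.1.2 := by
  simp [coinvBasis, Basis.span_apply, Basis.tensorProduct_apply']

theorem pB_comp_coinvBasis : pB k B ∘ coinvBasis hbas = bas ∘ fun s => s.1.1 := by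
  ext s
  simp [pB, coinvBasis_apply, pB0_tmul, (hbas.isGroupLikeElem _).counit_eq_one]

theorem surjective_pB_iff [Nontrivial k] :
    Function.Surjective (pB k B) ↔ ∀ a : M, ∃ b, a * b = 1 := by
  have hrange : LinearMap.range (pB k B) =
      Submodule.span k (bas '' Set.range fun s : {p : M × M // p.1 * p.2 = 1} => s.1.1) := by
    rw [LinearMap.range_eq_map, ← (coinvBasis hbas).span_eq, Submodule.map_span,
      ← Set.range_comp, pB_comp_coinvBasis, Set.range_comp]
  rw [← LinearMap.range_eq_top, eq_top_iff, ← bas.span_eq, Submodule.span_le, hrange]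
  simp only [Set.range_subset_iff, SetLike.mem_coe, bas.self_mem_span_image]
  exact forall_congr' fun a =>
    ⟨fun ⟨s, hs⟩ => ⟨s.1.2, hs ▸ s.2⟩, fun ⟨b, hb⟩ => ⟨⟨(a, b), hb⟩, rfl⟩⟩

theorem injective_pB_iff [Nontrivial k] :
    Function.Injective (pB k B) ↔ ∀ a b c : M, a * b = 1 → a * c = 1 → b = c := by
  have hli : Function.Injective (pB k B) ↔ LinearIndependent k (pB k B ∘ coinvBasis hbas) :=
    ⟨fun h => (coinvBasis hbas).linearIndependent.map' _ (LinearMap.ker_eq_bot.mpr h),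
      LinearMap.injective_of_linearIndependent (coinvBasis hbas).span_eq⟩
  rw [hli, pB_comp_coinvBasis]
  constructor
  · intro h a b c hb hc
    have := h.injective (a₁ := ⟨(a, b), hb⟩) (a₂ := ⟨(a, c), hc⟩) rfl
    simpa using this
  · intro h
    refine bas.linearIndependent.comp _ fun s t hst => Subtype.ext (Prod.ext hst ?_)
    exact h _ _ _ s.2 (hst ▸ t.2)

theorem oslashRel_le_ker_s15 {V : Type*} [AddCommGroup V] [Module k V] (T : B ⊗[k] B →ₗ[k] V)
    (hT : ∀ a b g : M, T (bas (a * g) ⊗ₜ[k] bas (b * g)) = T (bas a ⊗ₜ[k] bas b)) :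
    oslashRel k B ≤ LinearMap.ker T := by
  refine Submodule.span_le.mpr ?_
  rintro _ ⟨m, x, hx, rfl⟩
  have hgrouplike : ∀ g, T (m * comul (bas g)) = T m := by
    refine fun g => LinearMap.congr_fun (f := T ∘ₗ LinearMap.mulRight k (comul (bas g))) (g := T)
      ((bas.tensorProduct bas).ext fun p => ?_) m
    simp only [LinearMap.comp_apply, LinearMap.mulRight_apply, Basis.tensorProduct_apply',
      (hbas.isGroupLikeElem g).comul_eq_tmul_self, Algebra.TensorProduct.tmul_mul_tmul,
      ← hbas.map_mul, hT]
  have hcounit : T (m * comul x) = counit (R := k) x • T m := by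
    refine LinearMap.congr_fun (f := T ∘ₗ LinearMap.mulLeft k m ∘ₗ comul)
      (g := counit.smulRight (T m)) (bas.ext fun g => ?_) x
    simp [hgrouplike, (hbas.isGroupLikeElem g).counit_eq_one]
  rw [SetLike.mem_coe, LinearMap.mem_ker, hcounit, hx, zero_smul]

theorem injective_iB_iff [Nontrivial k] :
    Function.Injective (iB k B) ↔ ∀ a b c : M, a * c = b * c → a = b := by
  constructor
  · intro h a b c habc
    have hi : ∀ x : M, iB k B (bas x) = omk k (bas (x * c) ⊗ₜ[k] bas c) := fun x =>
      calc iB k B (bas x) = omk k (bas x ⊗ₜ[k] 1) := rfl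
        _ = omk k ((bas x ⊗ₜ[k] 1) * comul (bas c)) :=
          (omk_mul_comul_of_isGroupLikeElem _ (hbas.isGroupLikeElem c)).symm
        _ = omk k (bas (x * c) ⊗ₜ[k] bas c) := by
          rw [(hbas.isGroupLikeElem c).comul_eq_tmul_self, Algebra.TensorProduct.tmul_mul_tmul,
            one_mul, hbas.map_mul]
    exact bas.injective (h (by rw [hi, hi, habc]))
  · intro hcancel
    let T := (bas.tensorProduct bas).constr k fun p => divRight bas p.1 p.2
    have hT : ∀ a b : M, T (bas a ⊗ₜ[k] bas b) = divRight bas a b := fun a b => by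
      rw [← Basis.tensorProduct_apply, Basis.constr_basis]
    let L := (oslashRel k B).liftQ T
      (oslashRel_le_ker_s15 hbas T fun a b g => by rw [hT, hT, divRight_mul_right hcancel])
    refine Function.LeftInverse.injective (g := L) fun y => LinearMap.congr_fun (f := L ∘ₗ iB k B)
      (g := LinearMap.id) (bas.ext fun a => ?_) y
    show T (bas a ⊗ₜ[k] 1) = bas a
    rw [← hbas.map_one, hT, divRight_one]

end MonoidBialgebra

/-- The monoid bialgebra `kM` is encoded as a bialgebra `B` with a multiplicative basis
`φ : M →* B` of grouplike elements. -/
theorem stmt15 (k B M : Type*) [Field k] [Ring B] [Bialgebra k B] [Monoid M]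
    (φ : M →* B)
    (hΔ : ∀ g : M, Coalgebra.comul (R := k) (φ g) = φ g ⊗ₜ[k] φ g)
    (hε : ∀ g : M, Coalgebra.counit (R := k) (φ g) = 1)
    (hbasis : ∃ bas : Module.Basis M k B, ∀ g : M, bas g = φ g) :
    (Function.Surjective (pB k B) ↔ ∀ x : M, IsUnit x) ∧
    (Function.Injective (pB k B) ↔
      ∀ a b c : M, a * b = 1 → a * c = 1 → b = c) ∧
    (Function.Injective (iB k B) ↔
      ∀ a b c : M, a * c = b * c → a = b) := by
  obtain ⟨bas, hbas⟩ := hbasis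
  have hmonoid : IsMonoidBialgebraBasis bas :=
    { isGroupLikeElem := fun g => ⟨hbas g ▸ hε g, hbas g ▸ hΔ g⟩
      map_mul := fun a b => by simp only [hbas, map_mul]
      map_one := by rw [hbas, map_one] }
  exact ⟨(surjective_pB_iff hmonoid).trans forall_isUnit_iff_forall_exists_mul_eq_one.symm,
    injective_pB_iff hmonoid, injective_iB_iff hmonoid⟩
end
end
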